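/- arXiv:2509.04681 — 6 statements merged into one kernel-verified Lean document; each statement's English description precedes it below -/
import Mathlib

section
/- If f : M₁ → M₂ and g : M₂ → M₃ are homomorphisms of R-modules such that ker f, coker f, ker g, coker g all have finite length, then ker(g∘f) and coker(g∘f) have finite length and L(coker(g∘f)) − L(ker(g∘f)) = L(coker f) − L(ker f) + L(coker g) − L(ker g). -/
/-!
Put `p = range f` and `q = ker g` in `M₂`. Then `ker (g ∘ f) = f⁻¹ q` is an extension of
`p ⊓ q` by `ker f`, and `coker (g ∘ f) = M₃ / g p` is an extension of `coker g` by
`M₂ / (p ⊔ q)`. On the other side, `ker g` is an extension of `q / (p ⊓ q)` by `p ⊓ q`, and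
`coker f` one of `M₂ / (p ⊔ q)` by `(p ⊔ q) / p ≅ q / (p ⊓ q)`.
Additivity of length on these four short exact sequences gives the identity in `ℕ∞` without
any finiteness assumption, and the finiteness of `ker (g ∘ f)` and `coker (g ∘ f)` is read off
from the same equations.
-/

/-- The length of a module: the supremum of lengths of strictly increasing chains of
submodules, i.e. the Krull dimension of the submodule lattice. -/
noncomputable def moduleLength (R M : Type*) [Ring R] [AddCommGroup M] [Module R M] : ℕ∞ :=
  WithBot.unbotD 0 (Order.krullDim (Submodule R M))

open LinearMap

lemma moduleLength_eq_length (R M : Type*) [Ring R] [AddCommGroup M] [Module R M] :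
    moduleLength R M = Module.length R M := by
  rw [moduleLength, ← Module.coe_length, WithBot.unbotD_coe]

namespace Module

variable {R M N : Type*} [Ring R] [AddCommGroup M] [Module R M] [AddCommGroup N] [Module R N]

lemma length_eq_length_add_length_quotient (p : Submodule R M) :
    length R M = length R p + length R (M ⧸ p) :=
  length_eq_add_of_exact p.subtype p.mkQ p.injective_subtype p.mkQ_surjective
    (LinearMap.exact_subtype_mkQ p)

lemma length_eq_length_ker_add_length_range (f : M →ₗ[R] N) :
    length R M = length R (ker f) + length R (range f) := by
  rw [length_eq_length_add_length_quotient (ker f), f.quotKerEquivRange.length_eq]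

lemma length_quotient_eq_length_map_mkQ_add (p q : Submodule R M) :
    length R (M ⧸ p) = length R (q.map p.mkQ) + length R (M ⧸ (p ⊔ q)) := by
  rw [length_eq_length_add_length_quotient (q.map p.mkQ),
    (Submodule.quotientQuotientEquivQuotientSup p q).length_eq]

lemma length_comap (f : M →ₗ[R] N) (p : Submodule R N) :
    length R (p.comap f) = length R (ker f) + length R ↥(range f ⊓ p) := by
  rw [length_eq_length_ker_add_length_range (f.domRestrict (p.comap f)), ker_domRestrict,
    range_domRestrict, Submodule.map_comap_eq,
    (Submodule.comapSubtypeEquivOfLe (ker_le_comap f)).length_eq]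

lemma length_eq_length_inf_add_length_map_mkQ (p q : Submodule R M) :
    length R q = length R ↥(p ⊓ q) + length R (q.map p.mkQ) := by
  have h := length_comap q.subtype p
  rw [Submodule.ker_subtype, Submodule.range_subtype, length_bot, zero_add, inf_comm] at h
  rw [length_eq_length_ker_add_length_range (p.mkQ ∘ₗ q.subtype), ker_comp,
    Submodule.ker_mkQ, h, range_comp, Submodule.range_subtype]

lemma length_quotient_map (g : M →ₗ[R] N) (p : Submodule R M) :
    length R (N ⧸ p.map g) = length R (N ⧸ range g) + length R (M ⧸ (p ⊔ ker g)) := by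
  have hker : ker ((p.map g).mkQ ∘ₗ g) = p ⊔ ker g := by
    rw [ker_comp, Submodule.ker_mkQ, Submodule.comap_map_eq]
  rw [length_quotient_eq_length_map_mkQ_add (p.map g) (range g),
    sup_eq_right.mpr map_le_range, ← range_comp, ← hker,
    ((p.map g).mkQ ∘ₗ g).quotKerEquivRange.length_eq, add_comm]

end Module

/-- If `ker f`, `coker f`, `ker g`, `coker g` all have finite length, then so do
`ker (g ∘ f)` and `coker (g ∘ f)`, and
`L(coker(g∘f)) − L(ker(g∘f)) = L(coker f) − L(ker f) + L(coker g) − L(ker g)`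
(stated additively to avoid subtraction in `ℕ∞`). -/
theorem length_ker_coker_comp {R M₁ M₂ M₃ : Type*} [CommRing R]
    [AddCommGroup M₁] [AddCommGroup M₂] [AddCommGroup M₃]
    [Module R M₁] [Module R M₂] [Module R M₃]
    (f : M₁ →ₗ[R] M₂) (g : M₂ →ₗ[R] M₃)
    (h₁ : IsFiniteLength R (ker f)) (h₂ : IsFiniteLength R (M₂ ⧸ range f))
    (h₃ : IsFiniteLength R (ker g)) (h₄ : IsFiniteLength R (M₃ ⧸ range g)) :
    IsFiniteLength R (ker (g ∘ₗ f)) ∧ IsFiniteLength R (M₃ ⧸ range (g ∘ₗ f)) ∧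
    moduleLength R (M₃ ⧸ range (g ∘ₗ f)) + moduleLength R (ker f) + moduleLength R (ker g)
      = moduleLength R (ker (g ∘ₗ f)) + moduleLength R (M₂ ⧸ range f)
        + moduleLength R (M₃ ⧸ range g) := by
  simp only [moduleLength_eq_length, ← Module.length_ne_top_iff] at h₁ h₂ h₃ h₄ ⊢
  have hker : Module.length R (ker (g ∘ₗ f))
      = Module.length R (ker f) + Module.length R ↥(range f ⊓ ker g) := by
    rw [ker_comp]; exact Module.length_comap f (ker g)
  have hcoker : Module.length R (M₃ ⧸ range (g ∘ₗ f))
      = Module.length R (M₃ ⧸ range g) + Module.length R (M₂ ⧸ (range f ⊔ ker g)) := by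
    rw [range_comp]; exact Module.length_quotient_map g (range f)
  have hkerg := Module.length_eq_length_inf_add_length_map_mkQ (range f) (ker g)
  have hcokerf := Module.length_quotient_eq_length_map_mkQ_add (range f) (ker g)
  refine ⟨?_, ?_, ?_⟩
  · rw [hker]
    exact WithTop.add_ne_top.mpr ⟨h₁, (WithTop.add_ne_top.mp (hkerg ▸ h₃)).1⟩
  · rw [hcoker]
    exact WithTop.add_ne_top.mpr ⟨h₄, (WithTop.add_ne_top.mp (hcokerf ▸ h₂)).2⟩
  · rw [hker, hcoker, hkerg, hcokerf]
    ring
end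

section
/- The alternating sum (−1)^n ∑_{i=0}^{n} (−1)^i C(n,i) C(n+i,n) equals 1 for every natural number n, where C denotes the binomial coefficient. -/
/-! Up to the sign `(-1)^n`, the sum is the `n`-th forward difference at `0` of
`x ↦ C(n + x, n)`. Each difference lowers the lower index of a binomial coefficient by one
(Pascal's rule), so `n` differences turn `C(n + x, n)` into `C(n + x, 0) = 1`. -/

open Finset fwdDiff

theorem fwdDiff_iter_add_choose_self (m n y : ℕ) :
    (Δ_[1])^[n] (fun x ↦ (m + x).choose n : ℕ → ℤ) y = 1 := by
  have h := congrFun (fwdDiff_iter_choose 0 n) (y + m)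
  simp only [add_zero, Nat.choose_zero_right, Nat.cast_one] at h
  simp_rw [add_comm m]
  exact (fwdDiff_iter_comp_add 1 (fun x ↦ (x.choose n : ℤ)) m n y).trans h

theorem sum_neg_one_pow_mul_choose_mul_eq_fwdDiff_iter {R : Type*} [CommRing R]
    (f : ℕ → R) (n : ℕ) :
    ∑ i ∈ range (n + 1), (-1 : R) ^ i * n.choose i * f i = (-1) ^ n * (Δ_[1])^[n] f 0 := by
  rw [fwdDiff_iter_eq_sum_shift, mul_sum]
  refine sum_congr rfl fun i hi ↦ ?_
  have hsign : (-1 : R) ^ n = (-1) ^ (n - i) * (-1) ^ i := by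
    rw [← pow_add, Nat.sub_add_cancel (mem_range_succ_iff.mp hi)]
  simp only [zsmul_eq_mul, zero_add, nsmul_one, Nat.cast_id, Int.cast_mul, Int.cast_pow,
    Int.cast_neg, Int.cast_one, Int.cast_natCast, hsign]
  have hsq : (-1 : R) ^ (n - i) * (-1) ^ (n - i) = 1 := by
    rw [← mul_pow, neg_one_mul, neg_neg, one_pow]
  linear_combination (-(-1 : R) ^ i * n.choose i * f i) * hsq

/-- The alternating sum `(−1)^n ∑_{i=0}^{n} (−1)^i C(n,i) C(n+i,n)` equals `1`
for every natural number `n`. -/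
theorem alternating_binomial_sum_eq_one (n : ℕ) :
    (-1 : ℤ) ^ n *
      ∑ i ∈ Finset.range (n + 1),
        (-1 : ℤ) ^ i * (n.choose i : ℤ) * ((n + i).choose n : ℤ) = 1 := by
  rw [sum_neg_one_pow_mul_choose_mul_eq_fwdDiff_iter (fun i ↦ ((n + i).choose n : ℤ)),
    fwdDiff_iter_add_choose_self, mul_one, ← mul_pow, neg_one_mul, neg_neg, one_pow]
end

section
/- Let Δ_k denote the forward difference operator in the variable k (so Δ_k F(k) = F(k+1) − F(k)) and Δ_k^n its n-th iterate evaluated at k = 0. For natural numbers a, b with a + b = n − 1, one has Δ_k^n |_{k=0} ( ∑_{p=0}^{k−1} (μ + p)^a (ν + p − k)^b ) = (−1)^b · a! · b!, for all μ, ν (as polynomial identity in μ, ν). If a + b < n − 1 the result is 0. -/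
open Finset Function fwdDiff

/-- Iterated forward difference of `k ↦ (c - k)^b` at `0`. -/
lemma lemA : ∀ b m : ℕ, ∀ c : ℤ, b ≤ m →
    (fwdDiff 1)^[m] (fun k : ℕ => (c - (k : ℤ)) ^ b) 0
      = if b = m then (-1 : ℤ) ^ b * (b.factorial : ℤ) else 0 := by
  intro b
  induction b using Nat.strong_induction_on with
  | _ b IH =>
    intro m c hbm
    match m with
    | 0 =>
      obtain rfl : b = 0 := Nat.le_zero.mp hbm
      simp
    | (m + 1) =>
      rw [Function.iterate_succ_apply]
      have hΔ : fwdDiff 1 (fun k : ℕ => (c - (k : ℤ)) ^ b)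
          = ∑ i ∈ Finset.range b,
              ((-1 : ℤ) ^ (b - i) * (b.choose i : ℤ)) • (fun k : ℕ => (c - (k : ℤ)) ^ i) := by
        funext k
        simp only [fwdDiff, Finset.sum_apply, Pi.smul_apply, smul_eq_mul]
        have h1 : (c - ((k + 1 : ℕ) : ℤ)) = (c - (k : ℤ)) + (-1) := by push_cast; ring
        rw [h1, add_pow, Finset.sum_range_succ]
        simp only [Nat.sub_self, pow_zero, Nat.choose_self, Nat.cast_one, mul_one, one_mul]
        rw [add_sub_cancel_right]
        exact Finset.sum_congr rfl fun i _ => by ring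
      rw [hΔ, fwdDiff_iter_finset_sum, Finset.sum_apply]
      simp only [fwdDiff_iter_const_smul, Pi.smul_apply, smul_eq_mul]
      have hsum : ∀ i ∈ Finset.range b,
          (-1 : ℤ) ^ (b - i) * (b.choose i : ℤ) * (fwdDiff 1)^[m] (fun k : ℕ => (c - (k : ℤ)) ^ i) 0
            = if i = m then ((-1 : ℤ) ^ b * (b.choose i : ℤ) * (i.factorial : ℤ)) else 0 := by
        intro i hi
        have hib : i < b := Finset.mem_range.mp hi
        have him : i ≤ m := by omega
        rw [IH i hib m c him]
        split_ifs with h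
        · have : (-1 : ℤ) ^ (b - i) * (-1 : ℤ) ^ i = (-1 : ℤ) ^ b := by
            rw [← pow_add, Nat.sub_add_cancel hib.le]
          ring_nf
          rw [mul_assoc, this]
        · ring
      rw [Finset.sum_congr rfl hsum, Finset.sum_ite_eq' (Finset.range b) m]
      by_cases hb : b = m + 1
      · subst hb
        rw [if_pos (Finset.mem_range.mpr (Nat.lt_succ_self m)), if_pos rfl]
        rw [Nat.choose_succ_self_right]
        rw [Nat.factorial_succ]
        push_cast
        ring
      · have hm : m ∉ Finset.range b := by
          simp only [Finset.mem_range]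
          omega
        rw [if_neg hm, if_neg hb]

lemma lemB : ∀ a b n : ℕ, ∀ μ ν : ℤ, a + b + 1 ≤ n →
    (fwdDiff 1)^[n] (fun k : ℕ => ∑ p ∈ Finset.range k,
        (μ + (p : ℤ)) ^ a * (ν + (p : ℤ) - (k : ℤ)) ^ b) 0
      = if a + b + 1 = n then (-1 : ℤ) ^ b * a.factorial * b.factorial else 0 := by
  intro a
  induction a using Nat.strong_induction_on with
  | _ a IH =>
    intro b n μ ν han
    match n with
    | 0 => exact absurd han (by omega)
    | (m + 1) =>
      rw [Function.iterate_succ_apply]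
      have key : ∀ p : ℕ, (μ + (p : ℤ) + 1) ^ a - (μ + (p : ℤ)) ^ a
          = ∑ i ∈ Finset.range a, (a.choose i : ℤ) * (μ + (p : ℤ)) ^ i := by
        intro p
        rw [add_pow, Finset.sum_range_succ]
        simp only [Nat.sub_self, pow_zero, Nat.choose_self, Nat.cast_one, mul_one, one_pow]
        rw [add_sub_cancel_right]
        exact Finset.sum_congr rfl fun i _ => by ring
      have hΔ : fwdDiff 1 (fun k : ℕ => ∑ p ∈ Finset.range k,
              (μ + (p : ℤ)) ^ a * (ν + (p : ℤ) - (k : ℤ)) ^ b)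
          = (fun k : ℕ => μ ^ a * ((ν - 1) - (k : ℤ)) ^ b)
            + ∑ i ∈ Finset.range a, ((a.choose i : ℤ)) •
                (fun k : ℕ => ∑ p ∈ Finset.range k,
                  (μ + (p : ℤ)) ^ i * (ν + (p : ℤ) - (k : ℤ)) ^ b) := by
        funext k
        simp only [fwdDiff, Pi.add_apply, Finset.sum_apply, Pi.smul_apply, smul_eq_mul]
        rw [Finset.sum_range_succ']
        push_cast
        simp only [Finset.mul_sum]
        rw [Finset.sum_comm]
        have hS : (∑ p ∈ Finset.range k, (μ + ((p : ℤ) + 1)) ^ a * (ν + ((p : ℤ) + 1) - ((k : ℤ) + 1)) ^ b)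
                - (∑ p ∈ Finset.range k, (μ + (p : ℤ)) ^ a * (ν + (p : ℤ) - (k : ℤ)) ^ b)
              = ∑ p ∈ Finset.range k, ∑ i ∈ Finset.range a,
                  (a.choose i : ℤ) * ((μ + (p : ℤ)) ^ i * (ν + (p : ℤ) - (k : ℤ)) ^ b) := by
          rw [← Finset.sum_sub_distrib]
          refine Finset.sum_congr rfl fun p _ => ?_
          rw [show (ν + ((p : ℤ) + 1) - ((k : ℤ) + 1)) = (ν + (p : ℤ) - (k : ℤ)) from by ring,
            show (μ + ((p : ℤ) + 1)) = (μ + (p : ℤ) + 1) from by ring,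
            ← sub_mul, key p, Finset.sum_mul]
          exact Finset.sum_congr rfl fun i _ => by ring
        have ht : (μ + (0 : ℤ)) ^ a * (ν + (0 : ℤ) - ((k : ℤ) + 1)) ^ b
            = μ ^ a * ((ν - 1) - (k : ℤ)) ^ b := by
          have h1 : (μ + (0 : ℤ)) = μ := by ring
          have h2 : (ν + (0 : ℤ) - ((k : ℤ) + 1)) = ((ν - 1) - (k : ℤ)) := by ring
          rw [h1, h2]
        linear_combination hS + ht
      rw [hΔ, fwdDiff_iter_add, Pi.add_apply, fwdDiff_iter_finset_sum, Finset.sum_apply]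
      simp only [fwdDiff_iter_const_smul, Pi.smul_apply, smul_eq_mul]
      have h1 : (fwdDiff 1)^[m] (fun k : ℕ => μ ^ a * ((ν - 1) - (k : ℤ)) ^ b) 0
          = μ ^ a * (if b = m then (-1 : ℤ) ^ b * (b.factorial : ℤ) else 0) := by
        have hf : (fun k : ℕ => μ ^ a * ((ν - 1) - (k : ℤ)) ^ b)
            = (μ ^ a) • (fun k : ℕ => ((ν - 1) - (k : ℤ)) ^ b) := by
          funext k; simp [smul_eq_mul]
        rw [hf, fwdDiff_iter_const_smul, Pi.smul_apply, smul_eq_mul,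
          lemA b m (ν - 1) (by omega)]
      rw [h1]
      have hsum : ∀ i ∈ Finset.range a,
          (a.choose i : ℤ) * (fwdDiff 1)^[m] (fun k : ℕ => ∑ p ∈ Finset.range k,
              (μ + (p : ℤ)) ^ i * (ν + (p : ℤ) - (k : ℤ)) ^ b) 0
            = if i + b + 1 = m then
                (a.choose i : ℤ) * ((-1 : ℤ) ^ b * (i.factorial : ℤ) * (b.factorial : ℤ))
              else 0 := by
        intro i hi
        have hia : i < a := Finset.mem_range.mp hi
        rw [IH i hia b m μ ν (by omega)]
        split_ifs with h
        · ring
        · ring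
      rw [Finset.sum_congr rfl hsum]
      by_cases hcase : a + b + 1 = m + 1
      · rw [if_pos hcase]
        rcases Nat.eq_zero_or_pos a with ha | ha
        · subst ha
          have hbm : b = m := by omega
          simp [hbm, Nat.factorial]
        · obtain ⟨a', rfl⟩ : ∃ a', a = a' + 1 := ⟨a - 1, by omega⟩
          have hbm : b ≠ m := by omega
          rw [if_neg hbm, mul_zero, zero_add]
          rw [Finset.sum_congr rfl (fun i (hi : i ∈ Finset.range (a' + 1)) =>
            if_congr (show i + b + 1 = m ↔ i = a' by omega) rfl rfl)]
          rw [Finset.sum_ite_eq' (Finset.range (a' + 1)) a']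
          rw [if_pos (Finset.mem_range.mpr (Nat.lt_succ_self a'))]
          rw [Nat.choose_succ_self_right]
          push_cast [Nat.factorial_succ]
          ring
      · rw [if_neg hcase]
        have hb : b ≠ m := by omega
        rw [if_neg hb, mul_zero, zero_add]
        refine Finset.sum_eq_zero fun i hi => ?_
        rw [if_neg (by have := Finset.mem_range.mp hi; omega)]

/-- The forward difference operator in the (natural number) variable `k`. -/
def fwdDiffNat (F : ℕ → ℤ) : ℕ → ℤ := fun k => F (k + 1) - F k

/-- For `a + b = n − 1`, the `n`-th finite difference at `k = 0` of
`∑_{p=0}^{k−1} (μ + p)^a (ν + p − k)^b` equals `(−1)^b · a! · b!`, and for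
`a + b < n − 1` it is `0`. -/
theorem fwdDiff_pow_sum (n a b : ℕ) (hn : 1 ≤ n) (μ ν : ℤ) :
    (a + b + 1 = n →
      fwdDiffNat^[n]
        (fun k : ℕ => ∑ p ∈ Finset.range k,
          (μ + (p : ℤ)) ^ a * (ν + (p : ℤ) - (k : ℤ)) ^ b) 0
        = (-1 : ℤ) ^ b * a.factorial * b.factorial) ∧
    (a + b + 1 < n →
      fwdDiffNat^[n]
        (fun k : ℕ => ∑ p ∈ Finset.range k,
          (μ + (p : ℤ)) ^ a * (ν + (p : ℤ) - (k : ℤ)) ^ b) 0 = 0) := by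
  have hd : fwdDiffNat = fwdDiff (1 : ℕ) := rfl
  constructor
  · intro h
    rw [hd, lemB a b n μ ν (le_of_eq h), if_pos h]
  · intro h
    rw [hd, lemB a b n μ ν (le_of_lt h), if_neg (Nat.ne_of_lt h)]
end

section
/- Let R be a Noetherian local ring with maximal ideal m, and let U = ⊕_{ν≥0} U_ν be a standard graded R-algebra generated in degree 1 with U_0 = R, which is a subalgebra of a polynomial ring S = R[x₁,…,x_m] generated by finitely many linear forms. The minimal prime ideals of U are exactly the ideals p* = pS ∩ U where p ranges over the minimal prime ideals of R. -/
open MvPolynomial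

/-- Let `R` be a Noetherian local ring and `U ⊆ S = R[x₁,…,x_m]` the subalgebra generated by
linear forms `y_j = ∑_i A_{ij} x_i`. The minimal primes of `U` are exactly the ideals
`p* = pS ∩ U` for `p` a minimal prime of `R`. -/
theorem minimalPrimes_linear_subalgebra {R : Type*} [CommRing R] [IsNoetherianRing R]
    [IsLocalRing R] (m n : ℕ) (A : Fin m → Fin n → R)
    (U : Subalgebra R (MvPolynomial (Fin m) R))
    (hU : U = Algebra.adjoin R
      (Set.range fun j : Fin n => ∑ i : Fin m, A i j • (X i : MvPolynomial (Fin m) R))) :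
    minimalPrimes U =
      {q | ∃ p ∈ minimalPrimes R,
        q = Ideal.comap U.val
          (Ideal.map (algebraMap R (MvPolynomial (Fin m) R)) p)} := by
  classical
  set S := MvPolynomial (Fin m) R with hS
  have hCalg : algebraMap R S = (C : R →+* S) := rfl
  set P : Ideal R → Ideal S := fun p => Ideal.map (algebraMap R S) p with hP
  set Q : Ideal R → Ideal U := fun p => Ideal.comap U.val (P p) with hQ
  -- P p is prime when p is prime
  have hPprime : ∀ p : Ideal R, p.IsPrime → (P p).IsPrime := by
    intro p hp
    have : P p = RingHom.ker (MvPolynomial.map (Ideal.Quotient.mk p) :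
        S →+* MvPolynomial (Fin m) (R ⧸ p)) := by
      rw [MvPolynomial.ker_map, Ideal.mk_ker, hP, hCalg]
    rw [this]
    exact RingHom.ker_isPrime _
  have hQprime : ∀ p : Ideal R, p.IsPrime → (Q p).IsPrime := fun p hp =>
    (hPprime p hp).comap _
  -- contraction of P p to R is p
  have hcontr : ∀ p : Ideal R, Ideal.comap (algebraMap R S) (P p) = p := by
    intro p
    refine le_antisymm ?_ (Ideal.le_comap_map)
    intro r hr
    have : (C r : S) ∈ P p := hr
    rw [hP, hCalg] at this
    have := MvPolynomial.mem_map_C_iff.1 this 0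
    simpa using this
  -- contraction of Q p to R is p
  have hcontrU : ∀ p : Ideal R, Ideal.comap (algebraMap R U) (Q p) = p := by
    intro p
    have h1 : (U.val : U →+* S).comp (algebraMap R U) = algebraMap R S :=
      U.val.comp_algebraMap
    show Ideal.comap (algebraMap R U) (Ideal.comap (U.val : U →+* S) (P p)) = p
    rw [Ideal.comap_comap, h1, hcontr]
  -- every prime of U contains some Q p with p minimal
  have hkey : ∀ q : Ideal U, q.IsPrime → ∃ p ∈ minimalPrimes R, Q p ≤ q := by
    intro q hq
    have hfin : (minimalPrimes R).Finite := minimalPrimes.finite_of_isNoetherianRing R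
    have hinf : hfin.toFinset.inf Q ≤ q := by
      intro f hf
      have hall : ∀ p ∈ minimalPrimes R, (f : S) ∈ P p := by
        intro p hp
        have hle : hfin.toFinset.inf Q ≤ Q p :=
          Finset.inf_le (hfin.mem_toFinset.2 hp)
        exact hle hf
      have hcoeff : ∀ d : Fin m →₀ ℕ, (f : S).coeff d ∈ nilradical R := by
        intro d
        have : (f : S).coeff d ∈ sInf (minimalPrimes R) := by
          rw [Submodule.mem_sInf]
          intro p hp
          have := hall p hp
          rw [hP, hCalg] at this
          exact MvPolynomial.mem_map_C_iff.1 this d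
        have h2 : sInf (minimalPrimes R) = nilradical R := by
          have := Ideal.sInf_minimalPrimes (I := (⊥ : Ideal R))
          simpa [minimalPrimes, nilradical, Ideal.radical] using this
        rwa [h2] at this
      have hfmem : (f : S) ∈ Ideal.map (C : R →+* S) (nilradical R) :=
        MvPolynomial.mem_map_C_iff.2 hcoeff
      obtain ⟨k, hk⟩ := IsNoetherianRing.isNilpotent_nilradical R
      have hpow : ((f : S)) ^ k ∈ (Ideal.map (C : R →+* S) (nilradical R)) ^ k :=
        Ideal.pow_mem_pow hfmem k
      rw [← Ideal.map_pow, hk] at hpow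
      simp only [Submodule.zero_eq_bot, Ideal.map_bot, Ideal.mem_bot] at hpow
      have hfk : f ^ k = 0 := Subtype.ext (by simpa using hpow)
      exact hq.mem_of_pow_mem k (hfk ▸ q.zero_mem)
    obtain ⟨p, hpmem, hple⟩ := (Ideal.IsPrime.inf_le' hq).1 hinf
    exact ⟨p, hfin.mem_toFinset.1 hpmem, hple⟩
  ext q
  simp only [Set.mem_setOf_eq]
  constructor
  · intro hq
    obtain ⟨⟨hqp, -⟩, hqmin⟩ := hq
    obtain ⟨p, hp, hle⟩ := hkey q hqp
    have hple : q ≤ Q p := hqmin ⟨hQprime p hp.1.1, bot_le⟩ hle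
    exact ⟨p, hp, le_antisymm hple hle⟩
  · rintro ⟨p, hp, rfl⟩
    refine ⟨⟨hQprime p hp.1.1, bot_le⟩, ?_⟩
    rintro b ⟨hbprime, -⟩ hble
    obtain ⟨p', hp', hle'⟩ := hkey b hbprime
    have hp'p : p' ≤ p := by
      have := Ideal.comap_mono (f := algebraMap R U) (hle'.trans hble)
      rwa [hcontrU, hcontrU] at this
    have hpp' : p ≤ p' := hp.2 ⟨hp'.1.1, bot_le⟩ hp'p
    have : Q p ≤ Q p' := Ideal.comap_mono (Ideal.map_mono hpp')
    exact this.trans hle'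
end

section
/- Let R be a Noetherian local ring with maximal ideal m, r ∈ R, and let R̃ = R[t]_{(m, t−r)}, R* = R[t]_{m[t]}. If a ⊆ m R̃ is an ideal such that the specialization a(r) = a·R̃/(t−r) ⊆ R has finite colength in R, then a R* has finite colength in R*. -/
open Polynomial IsLocalRing

/-!
Let `P` be a prime of `R*` containing `a R*` and `p` its contraction to `R[t]`, so that
`a ⊆ p ⊆ m[t]`. Finite colength of `a R̃ + (t - r) R̃` makes `(m, t - r)` a minimal prime of
`p + (t - r)`, so by Krull's principal ideal theorem it has height at most one in `R[t]/p`.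
Since `t - r ∉ m[t]`, the chain `p ⊆ m[t] ⊊ (m, t - r)` then forces `p = m[t]`. Hence `m R*`
is the only prime containing `a R*`, which in a Noetherian ring means finite colength.
-/

section FiniteColength

variable {S : Type*} [CommRing S] {I : Ideal S}

theorem Ideal.IsPrime.isMaximal_of_isFiniteLength_quotient (hI : IsFiniteLength S (S ⧸ I))
    {P : Ideal S} (hP : P.IsPrime) (hIP : I ≤ P) : P.IsMaximal := by
  have : IsArtinianRing (S ⧸ I) :=
    isArtinian_of_tower S (isFiniteLength_iff_isNoetherian_isArtinian.mp hI).2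
  have hker : RingHom.ker (Ideal.Quotient.mk I) ≤ P := I.mk_ker.trans_le hIP
  have : (P.map (Ideal.Quotient.mk I)).IsPrime :=
    Ideal.map_isPrime_of_surjective Ideal.Quotient.mk_surjective hker
  have hmax := Ideal.comap_isMaximal_of_surjective (Ideal.Quotient.mk I)
    Ideal.Quotient.mk_surjective (K := P.map (Ideal.Quotient.mk I))
  rwa [Ideal.comap_map_of_surjective' _ Ideal.Quotient.mk_surjective, sup_eq_left.mpr hker]
    at hmax

theorem isFiniteLength_quotient_of_forall_isMaximal [IsNoetherianRing S]
    (h : ∀ P : Ideal S, P.IsPrime → I ≤ P → P.IsMaximal) : IsFiniteLength S (S ⧸ I) := by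
  have : Ring.KrullDimLE 0 (S ⧸ I) := Ring.krullDimLE_zero_iff.mpr fun J hJ ↦
    Ideal.isMaximal_of_isIntegral_of_isMaximal_comap _ <|
      h _ (hJ.comap _) ((Ideal.mk_ker (I := I)).symm.trans_le (Ideal.ker_le_comap _))
  have : IsArtinianRing (S ⧸ I) := IsNoetherianRing.isArtinianRing_of_krullDimLE_zero
  exact isFiniteLength_iff_isNoetherian_isArtinian.mpr
    ⟨isNoetherian_quotient I,
      isArtinian_of_surjective_algebraMap (Ideal.Quotient.mk_surjective (I := I))⟩

end FiniteColength

theorem IsLocalization.AtPrime.mem_minimalPrimes_of_isFiniteLength_quotient_map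
    {A : Type*} [CommRing A] (S : Type*) [CommRing S] [Algebra A S] (q : Ideal A) [q.IsPrime]
    [IsLocalization.AtPrime S q] {I : Ideal A} (hIq : I ≤ q)
    (hI : IsFiniteLength S (S ⧸ I.map (algebraMap A S))) : q ∈ I.minimalPrimes := by
  have := IsLocalization.AtPrime.isLocalRing S q
  refine ⟨⟨inferInstance, hIq⟩, fun Q ⟨hQ, hIQ⟩ hQq ↦ ?_⟩
  have hdisj : Disjoint (q.primeCompl : Set A) Q :=
    Set.disjoint_left.mpr fun _ hq hQ ↦ hq (hQq hQ)
  have hmax := (IsLocalization.isPrime_of_isPrime_disjoint q.primeCompl S Q hQ hdisj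
    ).isMaximal_of_isFiniteLength_quotient hI (Ideal.map_mono hIQ)
  rw [← IsLocalization.under_map_of_isPrime_disjoint q.primeCompl S hQ hdisj,
    IsLocalRing.eq_maximalIdeal hmax, IsLocalization.AtPrime.under_maximalIdeal S q]

theorem Ideal.eq_of_le_of_mem_minimalPrimes_sup_span_singleton {A : Type*} [CommRing A]
    [IsNoetherianRing A] {p p' Q : Ideal A} [p.IsPrime] [p'.IsPrime] {x : A}
    (hQ : Q ∈ (p ⊔ span {x}).minimalPrimes) (hpp' : p ≤ p') (hp'Q : p' ≤ Q)
    (hx : x ∉ p') : p' = p := by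
  set f := Ideal.Quotient.mk p
  have hkerp' : RingHom.ker f ≤ p' := p.mk_ker.trans_le hpp'
  have : (p'.map f).IsPrime := map_isPrime_of_surjective Quotient.mk_surjective hkerp'
  have : (Q.map f).IsPrime :=
    have := hQ.isPrime
    map_isPrime_of_surjective Quotient.mk_surjective
      (p.mk_ker.trans_le (le_sup_left.trans hQ.1.2))
  have hlt : p'.map f < Q.map f := by
    refine lt_of_le_of_ne (map_mono hp'Q) fun h ↦ hx ?_
    have hxQ : x ∈ (Q.map f).comap f :=
      mem_map_of_mem f (hQ.1.2 (mem_sup_right (mem_span_singleton_self x)))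
    rwa [← h, comap_map_of_surjective' f Quotient.mk_surjective, sup_eq_left.mpr hkerp'] at hxQ
  have hheight : (p'.map f).height + 1 ≤ 1 :=
    (height_add_one_le_of_lt_of_isPrime hlt).trans (map_height_le_one_of_mem_minimalPrimes hQ)
  have hbot : p'.map f = ⊥ := height_eq_zero_iff_eq_bot.mp <|
    Order.lt_one_iff.mp ((ENat.add_one_le_iff' ENat.one_ne_top).mp hheight)
  refine le_antisymm (fun y hy ↦ ?_) hpp'
  rw [← Quotient.eq_zero_iff_mem]
  exact (Submodule.mem_bot _).mp (hbot ▸ mem_map_of_mem f hy)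

theorem Polynomial.X_sub_C_notMem_map_C {R : Type*} [CommRing R] {I : Ideal R} (hI : I ≠ ⊤)
    (r : R) : X - C r ∉ I.map (C : R →+* R[X]) := by
  intro h
  have := Ideal.mem_map_C_iff.mp h 1
  simp only [coeff_sub, coeff_X_one, coeff_C, one_ne_zero, if_false, sub_zero] at this
  exact hI (I.eq_top_of_isUnit_mem this isUnit_one)

theorem finite_colength_of_specialization_general {R : Type*} [CommRing R] [IsNoetherianRing R]
    [IsLocalRing R] (r : R)
    [hm : (Ideal.map (Polynomial.C : R →+* R[X]) (maximalIdeal R)).IsPrime]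
    [ht : (Ideal.map (Polynomial.C : R →+* R[X]) (maximalIdeal R) ⊔
        Ideal.span {(X : R[X]) - Polynomial.C r}).IsPrime]
    (Rstar : Type*) [CommRing Rstar] [Algebra R[X] Rstar]
    [IsLocalization.AtPrime Rstar (Ideal.map (Polynomial.C : R →+* R[X]) (maximalIdeal R))]
    (Rtilde : Type*) [CommRing Rtilde] [Algebra R[X] Rtilde]
    [IsLocalization.AtPrime Rtilde (Ideal.map (Polynomial.C : R →+* R[X]) (maximalIdeal R) ⊔
        Ideal.span {(X : R[X]) - Polynomial.C r})]
    (a₀ : Ideal R[X])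
    (hfin : IsFiniteLength Rtilde
      (Rtilde ⧸ (Ideal.map (algebraMap R[X] Rtilde) a₀ ⊔
        Ideal.span {algebraMap R[X] Rtilde ((X : R[X]) - Polynomial.C r)}))) :
    IsFiniteLength Rstar (Rstar ⧸ Ideal.map (algebraMap R[X] Rstar) a₀) := by
  set pstar := Ideal.map (C : R →+* R[X]) (maximalIdeal R)
  set q := pstar ⊔ Ideal.span {(X : R[X]) - C r}
  have := IsLocalization.AtPrime.isLocalRing Rstar pstar
  have := IsLocalization.isNoetherianRing pstar.primeCompl Rstar inferInstance
  refine isFiniteLength_quotient_of_forall_isMaximal fun P hP ha₀P ↦ ?_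
  set p := P.under R[X]
  have ha₀p : a₀ ≤ p := Ideal.map_le_iff_le_comap.mp ha₀P
  have hpp : p ≤ pstar := IsLocalization.AtPrime.under_maximalIdeal Rstar pstar ▸
    Ideal.comap_mono (le_maximalIdeal hP.ne_top)
  have hq : q ∈ (a₀ ⊔ Ideal.span {X - C r}).minimalPrimes :=
    IsLocalization.AtPrime.mem_minimalPrimes_of_isFiniteLength_quotient_map Rtilde q
      (sup_le_sup_right (ha₀p.trans hpp) _)
      (by rwa [Ideal.map_sup, Ideal.map_span, Set.image_singleton])
  have hq' : q ∈ (p ⊔ Ideal.span {X - C r}).minimalPrimes :=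
    ⟨⟨hq.1.1, sup_le_sup_right hpp _⟩,
      fun Q hQ hQq ↦ hq.2 ⟨hQ.1, (sup_le_sup_right ha₀p _).trans hQ.2⟩ hQq⟩
  have hp : pstar = p := Ideal.eq_of_le_of_mem_minimalPrimes_sup_span_singleton hq' hpp
    le_sup_left (X_sub_C_notMem_map_C (maximalIdeal.isMaximal R).ne_top r)
  have hmaxP : maximalIdeal Rstar ≤ P :=
    (IsLocalization.under_le_under_iff pstar.primeCompl Rstar).mp <| by
      rw [IsLocalization.AtPrime.under_maximalIdeal Rstar pstar, hp]
  exact (le_antisymm (le_maximalIdeal hP.ne_top) hmaxP) ▸ maximalIdeal.isMaximal Rstar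

/-- Let `R` be a Noetherian local ring with maximal ideal `m`, `r ∈ R`,
`R̃ = R[t]_{(m, t−r)}` and `R* = R[t]_{m[t]}`. If `a ⊆ m R̃` is an ideal (extended from an
ideal `a₀ ⊆ m[t]` of `R[t]`) whose specialization `a(r) = a R̃/(t−r)` has finite colength
in `R`, then `a R*` has finite colength in `R*`. -/
theorem finite_colength_of_specialization {R : Type*} [CommRing R] [IsNoetherianRing R]
    [IsLocalRing R] (r : R)
    [hm : (Ideal.map (Polynomial.C : R →+* R[X]) (maximalIdeal R)).IsPrime]
    [ht : (Ideal.map (Polynomial.C : R →+* R[X]) (maximalIdeal R) ⊔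
        Ideal.span {(X : R[X]) - Polynomial.C r}).IsPrime]
    (Rstar : Type*) [CommRing Rstar] [Algebra R[X] Rstar]
    [IsLocalization.AtPrime Rstar (Ideal.map (Polynomial.C : R →+* R[X]) (maximalIdeal R))]
    (Rtilde : Type*) [CommRing Rtilde] [Algebra R[X] Rtilde]
    [IsLocalization.AtPrime Rtilde (Ideal.map (Polynomial.C : R →+* R[X]) (maximalIdeal R) ⊔
        Ideal.span {(X : R[X]) - Polynomial.C r})]
    (a₀ : Ideal R[X])
    (ha : a₀ ≤ Ideal.map (Polynomial.C : R →+* R[X]) (maximalIdeal R))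
    (hfin : IsFiniteLength Rtilde
      (Rtilde ⧸ (Ideal.map (algebraMap R[X] Rtilde) a₀ ⊔
        Ideal.span {algebraMap R[X] Rtilde ((X : R[X]) - Polynomial.C r)}))) :
    IsFiniteLength Rstar (Rstar ⧸ Ideal.map (algebraMap R[X] Rstar) a₀) :=
  finite_colength_of_specialization_general r (hm := hm) (ht := ht) Rstar Rtilde a₀ hfin
end

section
/- Let R be a Noetherian local ring, a, c ∈ R, and E a finitely generated R-module such that E/(a c)E has finite length. If K_a, K_c, K_{ac} denote the two-term complexes E → E given by multiplication by a, c, ac respectively, then χ(K_{ac}) = χ(K_a) + χ(K_c), i.e. L(E/acE) − L(ann_E(ac)) = L(E/aE) − L(ann_E(a)) + L(E/cE) − L(ann_E(c)). -/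
open LinearMap

section KerCoker

variable {R M N P : Type*} [Ring R] [AddCommGroup M] [Module R M] [AddCommGroup N] [Module R N]
  [AddCommGroup P] [Module R P]

open Module

lemma Module.length_eq_length_ker_add_length_range_s16 (φ : M →ₗ[R] N) :
    length R M = length R (ker φ) + length R (range φ) :=
  Module.length_eq_add_of_exact (ker φ).subtype φ.rangeRestrict (ker φ).injective_subtype
    φ.surjective_rangeRestrict (exact_iff.mpr (by rw [ker_rangeRestrict, Submodule.range_subtype]))

variable (f : M →ₗ[R] N) (g : N →ₗ[R] P)

namespace LinearMap

def kerCompToKer : ker (g ∘ₗ f) →ₗ[R] ker g :=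
  f.restrict fun _ hx ↦ mem_ker.mpr (mem_ker.mp hx)

def kerToCoker : ker g →ₗ[R] N ⧸ range f :=
  (range f).mkQ ∘ₗ (ker g).subtype

def cokerToCokerComp : N ⧸ range f →ₗ[R] P ⧸ range (g ∘ₗ f) :=
  (range f).mapQ _ g (by rintro _ ⟨x, rfl⟩; exact ⟨x, rfl⟩)

def cokerCompToCoker : P ⧸ range (g ∘ₗ f) →ₗ[R] P ⧸ range g :=
  Submodule.factor (range_comp_le_range f g)

lemma length_ker_kerCompToKer : length R (ker (kerCompToKer f g)) = length R (ker f) := by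
  rw [kerCompToKer, ker_restrict]
  exact (Submodule.comapSubtypeEquivOfLe (ker_le_ker_comp f g)).length_eq

lemma range_kerCompToKer : range (kerCompToKer f g) = ker (kerToCoker f g) := by
  ext ⟨y, hy⟩
  simp only [kerCompToKer, range_restrict, Submodule.mem_comap, Submodule.subtype_apply,
    Submodule.mem_map, mem_ker, coe_comp, Function.comp_apply, kerToCoker, Submodule.coe_subtype,
    Submodule.mkQ_apply, Submodule.Quotient.mk_eq_zero, mem_range]
  constructor
  · rintro ⟨x, -, rfl⟩
    exact ⟨x, rfl⟩
  · rintro ⟨x, rfl⟩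
    exact ⟨x, hy, rfl⟩

lemma range_kerToCoker : range (kerToCoker f g) = ker (cokerToCokerComp f g) := by
  ext y
  obtain ⟨y, rfl⟩ := (range f).mkQ_surjective y
  simp only [kerToCoker, Submodule.mkQ_apply, mem_range, coe_comp, Submodule.coe_subtype,
    Function.comp_apply, Subtype.exists, mem_ker, exists_prop, cokerToCokerComp,
    Submodule.mapQ_apply, Submodule.Quotient.mk_eq_zero]
  constructor
  · rintro ⟨n, hn, hny⟩
    obtain ⟨x, hx⟩ := (Submodule.Quotient.eq _).mp hny.symm
    exact ⟨x, by rw [hx, map_sub, hn, sub_zero]⟩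
  · rintro ⟨x, hx⟩
    refine ⟨y - f x, by rw [map_sub, hx, sub_self], (Submodule.Quotient.eq _).mpr ?_⟩
    simp

lemma range_cokerToCokerComp : range (cokerToCokerComp f g) = ker (cokerCompToCoker f g) := by
  ext z
  obtain ⟨z, rfl⟩ := (range (g ∘ₗ f)).mkQ_surjective z
  simp only [cokerToCokerComp, Submodule.mkQ_apply, mem_range, cokerCompToCoker, mem_ker,
    Submodule.mapQ_apply, id_coe, id_eq, Submodule.Quotient.mk_eq_zero]
  constructor
  · rintro ⟨n, hn⟩
    obtain ⟨n, rfl⟩ := (range f).mkQ_surjective n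
    obtain ⟨x, hx⟩ := (Submodule.Quotient.eq _).mp hn.symm
    exact ⟨n + f x, by rw [map_add, ← comp_apply, hx, add_sub_cancel]⟩
  · rintro ⟨n, rfl⟩
    exact ⟨Submodule.Quotient.mk n, rfl⟩

lemma range_cokerCompToCoker : range (cokerCompToCoker f g) = ⊤ :=
  range_eq_top.mpr (Submodule.factor_surjective (range_comp_le_range f g))

lemma length_quotient_range_comp :
    length R (P ⧸ range (g ∘ₗ f)) =
      length R (range (cokerToCokerComp f g)) + length R (P ⧸ range g) := by
  rw [length_eq_length_ker_add_length_range_s16 (cokerCompToCoker f g), ← range_cokerToCokerComp,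
    range_cokerCompToCoker, length_top]

lemma length_quotient_range_comp_add_length_ker_add_length_ker :
    length R (P ⧸ range (g ∘ₗ f)) + length R (ker f) + length R (ker g) =
      length R (ker (g ∘ₗ f)) + length R (N ⧸ range f) + length R (P ⧸ range g) := by
  have h₁ := length_eq_length_ker_add_length_range_s16 (kerCompToKer f g)
  have h₂ := length_eq_length_ker_add_length_range_s16 (kerToCoker f g)
  have h₃ := length_eq_length_ker_add_length_range_s16 (cokerToCokerComp f g)
  rw [length_ker_kerCompToKer] at h₁
  rw [← range_kerCompToKer] at h₂
  rw [← range_kerToCoker] at h₃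
  rw [length_quotient_range_comp, h₁, h₂, h₃]
  ac_rfl

lemma length_quotient_range_comp_le :
    length R (P ⧸ range (g ∘ₗ f)) ≤ length R (N ⧸ range f) + length R (P ⧸ range g) := by
  rw [length_quotient_range_comp, length_eq_length_ker_add_length_range_s16 (cokerToCokerComp f g)]
  gcongr
  exact le_add_self

end LinearMap

lemma IsFiniteLength.quotient_range_of_comp (h : IsFiniteLength R (P ⧸ range (g ∘ₗ f))) :
    IsFiniteLength R (P ⧸ range g) :=
  h.of_surjective (Submodule.factor_surjective (range_comp_le_range f g))

end KerCoker

section Endomorphism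

variable {R M : Type*} [Ring R] [AddCommGroup M] [Module R M]

open Module

lemma Module.End.length_quotient_range_pow_le (f : End R M) (n : ℕ) :
    length R (M ⧸ range (f ^ n)) ≤ n * length R (M ⧸ range f) := by
  induction n with
  | zero => simp [Submodule.Quotient.subsingleton_iff, End.one_eq_id]
  | succ n ih =>
    calc length R (M ⧸ range (f ^ (n + 1)))
        ≤ length R (M ⧸ range f) + length R (M ⧸ range (f ^ n)) := by
          rw [pow_succ, mul_eq_comp]; exact length_quotient_range_comp_le f (f ^ n)
      _ ≤ (n + 1 : ℕ) * length R (M ⧸ range f) := by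
          push_cast; rw [add_mul, one_mul, add_comm]; gcongr

lemma Module.End.isFiniteLength_ker [IsNoetherian R M] (f : End R M)
    (h : IsFiniteLength R (M ⧸ range f)) : IsFiniteLength R (ker f) := by
  obtain ⟨n, hn⟩ := Filter.eventually_atTop.mp f.eventually_disjoint_ker_pow_range_pow
  have hdisj : Disjoint (ker f) (range (f ^ (n + 1))) := by
    refine (hn (n + 1) n.le_succ).mono_left ?_
    rw [pow_succ, mul_eq_comp]
    exact ker_le_ker_comp f (f ^ n)
  have hinj : Function.Injective ((range (f ^ (n + 1))).mkQ ∘ₗ (ker f).subtype) := by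
    rw [← ker_eq_bot, ker_comp, Submodule.ker_mkQ, ← Submodule.disjoint_iff_comap_eq_bot]
    exact hdisj
  rw [← length_ne_top_iff, ← lt_top_iff_ne_top]
  calc length R (ker f) ≤ length R (M ⧸ range (f ^ (n + 1))) := length_le_of_injective _ hinj
    _ ≤ (n + 1 : ℕ) * length R (M ⧸ range f) := f.length_quotient_range_pow_le (n + 1)
    _ < ⊤ := WithTop.mul_lt_top (ENat.natCast_lt_top _) (length_ne_top_iff.mpr h).lt_top

end Endomorphism

lemma LinearMap.lsmul_mul_eq_comp {R M : Type*} [CommSemiring R] [AddCommMonoid M] [Module R M]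
    (r s : R) : lsmul R M (r * s) = lsmul R M r ∘ₗ lsmul R M s := by
  ext x
  exact mul_smul r s x

theorem chi_mul_add_general {R E : Type*} [CommRing R] [IsNoetherianRing R]
    [AddCommGroup E] [Module R E] [Module.Finite R E] (a c : R)
    (h : IsFiniteLength R (E ⧸ range (LinearMap.lsmul R E (a * c)))) :
    IsFiniteLength R (E ⧸ range (LinearMap.lsmul R E (a * c))) ∧
    IsFiniteLength R (ker (LinearMap.lsmul R E (a * c))) ∧
    IsFiniteLength R (E ⧸ range (LinearMap.lsmul R E a)) ∧
    IsFiniteLength R (ker (LinearMap.lsmul R E a)) ∧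
    IsFiniteLength R (E ⧸ range (LinearMap.lsmul R E c)) ∧
    IsFiniteLength R (ker (LinearMap.lsmul R E c)) ∧
    moduleLength R (E ⧸ range (LinearMap.lsmul R E (a * c)))
        + moduleLength R (ker (LinearMap.lsmul R E a))
        + moduleLength R (ker (LinearMap.lsmul R E c))
      = moduleLength R (ker (LinearMap.lsmul R E (a * c)))
        + moduleLength R (E ⧸ range (LinearMap.lsmul R E a))
        + moduleLength R (E ⧸ range (LinearMap.lsmul R E c)) := by
  have : IsNoetherian R E := isNoetherian_of_isNoetherianRing_of_finite R E
  have hac := lsmul_mul_eq_comp (M := E) a c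
  have hca : lsmul R E (a * c) = lsmul R E c ∘ₗ lsmul R E a := by
    rw [mul_comm, lsmul_mul_eq_comp]
  have ha : IsFiniteLength R (E ⧸ range (lsmul R E a)) :=
    (hac ▸ h).quotient_range_of_comp (lsmul R E c) (lsmul R E a)
  have hc : IsFiniteLength R (E ⧸ range (lsmul R E c)) :=
    (hca ▸ h).quotient_range_of_comp (lsmul R E a) (lsmul R E c)
  refine ⟨h, Module.End.isFiniteLength_ker _ h, ha, Module.End.isFiniteLength_ker _ ha, hc,
    Module.End.isFiniteLength_ker _ hc, ?_⟩
  simp only [moduleLength_eq_length]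
  rw [hca]
  exact length_quotient_range_comp_add_length_ker_add_length_ker (lsmul R E a) (lsmul R E c)

/-- For `a c : R` and a finitely generated module `E` with `E/(ac)E` of finite length,
all kernels and cokernels of multiplication by `a`, `c`, `ac` on `E` have finite length
and `χ(K_{ac}) = χ(K_a) + χ(K_c)`, i.e.
`L(E/acE) − L(ann_E(ac)) = L(E/aE) − L(ann_E(a)) + L(E/cE) − L(ann_E(c))`
(stated additively to avoid subtraction in `ℕ∞`). -/
theorem chi_mul_add {R E : Type*} [CommRing R] [IsNoetherianRing R] [IsLocalRing R]
    [AddCommGroup E] [Module R E] [Module.Finite R E] (a c : R)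
    (h : IsFiniteLength R (E ⧸ range (LinearMap.lsmul R E (a * c)))) :
    IsFiniteLength R (E ⧸ range (LinearMap.lsmul R E (a * c))) ∧
    IsFiniteLength R (ker (LinearMap.lsmul R E (a * c))) ∧
    IsFiniteLength R (E ⧸ range (LinearMap.lsmul R E a)) ∧
    IsFiniteLength R (ker (LinearMap.lsmul R E a)) ∧
    IsFiniteLength R (E ⧸ range (LinearMap.lsmul R E c)) ∧
    IsFiniteLength R (ker (LinearMap.lsmul R E c)) ∧
    moduleLength R (E ⧸ range (LinearMap.lsmul R E (a * c)))
        + moduleLength R (ker (LinearMap.lsmul R E a))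
        + moduleLength R (ker (LinearMap.lsmul R E c))
      = moduleLength R (ker (LinearMap.lsmul R E (a * c)))
        + moduleLength R (E ⧸ range (LinearMap.lsmul R E a))
        + moduleLength R (E ⧸ range (LinearMap.lsmul R E c)) :=
  chi_mul_add_general a c h
end
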